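/- Let (S,d_S,σ) be a compact metric measure space with σ of full support, and let γ ∈ Π(σ,σ) be a self-coupling with zero Gromov–Wasserstein cost, i.e., ∫∫ |d_S(s₁,s₂) − d_S(s₁',s₂')|² dγ(s₁,s₁') dγ(s₂,s₂') = 0. Then there exists a measure-preserving isometry ψ : S → S such that γ = (id,ψ)_#σ. -/

import Mathlib

open MeasureTheory
open scoped ENNReal

noncomputable section

variable {S : Type*} [MetricSpace S] [CompactSpace S] [MeasurableSpace S] [BorelSpace S]

def GWCost (γ : Measure (S × S)) : ℝ≥0∞ :=
  ∫⁻ q, ENNReal.ofReal ((dist q.1.1 q.2.1 - dist q.1.2 q.2.2) ^ 2) ∂(γ.prod γ)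

def IsCoupling (γ : Measure (S × S)) (σ τ : Measure S) : Prop :=
  γ.map Prod.fst = σ ∧ γ.map Prod.snd = τ

/-! Zero cost means `d(s₁, s₂) = d(s₁', s₂')` for `γ ⊗ γ`-almost every pair, hence, the condition
being closed, for every pair of points of `supp γ`. Taking `s₁ = s₂` shows that `supp γ` is the
graph of a map `ψ`, which is then an isometry. The graph is total because its first projection is
closed (`S` is compact) and `σ`-conull, and `σ` has full support. -/

namespace MeasureTheory.Measure

lemma eq_map_graph_of_ae_eq {X Y : Type*} [MeasurableSpace X] [MeasurableSpace Y]
    {γ : Measure (X × Y)} {f : X → Y} (hf : Measurable f)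
    (hγ : ∀ᵐ p ∂γ, p.2 = f p.1) : γ = (γ.map Prod.fst).map fun x => (x, f x) := by
  have hgraph : (fun p : X × Y => (p.1, f p.1)) =ᵐ[γ] id := by
    filter_upwards [hγ] with p hp
    rw [← hp]
    rfl
  have hgraph_meas : Measurable fun x => (x, f x) := measurable_id.prodMk hf
  rw [map_map hgraph_meas measurable_fst]
  exact map_id.symm.trans (map_congr hgraph).symm

variable {X Y : Type*} [TopologicalSpace X] [MeasurableSpace X]
  [TopologicalSpace Y] [MeasurableSpace Y]

lemma mk_mem_support_prod {μ : Measure X} {ν : Measure Y} [SFinite ν] {x : X} {y : Y}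
    (hx : x ∈ μ.support) (hy : y ∈ ν.support) : (x, y) ∈ (μ.prod ν).support := by
  rw [mem_support_iff_forall] at hx hy ⊢
  intro U hU
  obtain ⟨u, hu, v, hv, huv⟩ := mem_nhds_prod_iff.1 hU
  calc 0 < μ u * ν v := ENNReal.mul_pos (hx u hu).ne' (hy v hv).ne'
    _ = μ.prod ν (u ×ˢ v) := (prod_prod u v).symm
    _ ≤ μ.prod ν U := measure_mono huv

lemma support_map_fst_subset_image_support [OpensMeasurableSpace X] [CompactSpace Y]
    [HereditarilyLindelofSpace (X × Y)] (γ : Measure (X × Y)) :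
    (γ.map Prod.fst).support ⊆ Prod.fst '' γ.support := by
  have hclosed : IsClosed (Prod.fst '' γ.support) :=
    isClosedMap_fst_of_compactSpace _ isClosed_support
  refine support_subset_of_isClosed hclosed ?_
  rw [mem_ae_iff, map_apply measurable_fst hclosed.isOpen_compl.measurableSet]
  exact measure_mono_null (fun p hp hpγ => hp ⟨p, hpγ, rfl⟩) measure_compl_support

end MeasureTheory.Measure

open Measure

lemma ae_dist_eq_of_GWCost_eq_zero {γ : Measure (S × S)} (hcost : GWCost γ = 0) :
    ∀ᵐ q ∂(γ.prod γ), dist q.1.1 q.2.1 = dist q.1.2 q.2.2 := by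
  have hmeas : Measurable fun q : (S × S) × (S × S) =>
      ENNReal.ofReal ((dist q.1.1 q.2.1 - dist q.1.2 q.2.2) ^ 2) := by
    fun_prop
  filter_upwards [(lintegral_eq_zero_iff hmeas).1 hcost] with q hq
  have hsq : (dist q.1.1 q.2.1 - dist q.1.2 q.2.2) ^ 2 ≤ 0 := ENNReal.ofReal_eq_zero.1 hq
  nlinarith [sq_nonneg (dist q.1.1 q.2.1 - dist q.1.2 q.2.2)]

lemma dist_eq_of_mem_support_of_GWCost_eq_zero {γ : Measure (S × S)} [SFinite γ]
    (hcost : GWCost γ = 0) {p q : S × S} (hp : p ∈ γ.support) (hq : q ∈ γ.support) :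
    dist p.1 q.1 = dist p.2 q.2 := by
  have hclosed : IsClosed {r : (S × S) × (S × S) | dist r.1.1 r.2.1 = dist r.1.2 r.2.2} :=
    isClosed_eq (by fun_prop) (by fun_prop)
  exact support_subset_of_isClosed hclosed (ae_dist_eq_of_GWCost_eq_zero hcost)
    (mk_mem_support_prod hp hq)

theorem stmt_15 (σ : Measure S) [IsProbabilityMeasure σ]
    (hsupp : ∀ U : Set S, IsOpen U → U.Nonempty → 0 < σ U)
    (γ : Measure (S × S)) (hγ : IsCoupling γ σ σ) (hcost : GWCost γ = 0) :
    ∃ ψ : S → S, Measurable ψ ∧ σ.map ψ = σ ∧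
      (∀ s s', dist (ψ s) (ψ s') = dist s s') ∧
      γ = σ.map (fun s => (s, ψ s)) := by
  have : IsProbabilityMeasure γ :=
    have : IsProbabilityMeasure (γ.map Prod.fst) := hγ.1 ▸ inferInstance
    isProbabilityMeasure_of_map Prod.fst
  have : σ.IsOpenPosMeasure := ⟨fun U hU hne => (hsupp U hU hne).ne'⟩
  have hfiber (s : S) : ∃ t, (s, t) ∈ γ.support := by
    have hs : s ∈ (γ.map Prod.fst).support := by
      rw [hγ.1, support_eq_univ]
      trivial
    obtain ⟨⟨s', t⟩, hst, rfl⟩ := support_map_fst_subset_image_support γ hs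
    exact ⟨t, hst⟩
  choose ψ hψ using hfiber
  have hiso (s s' : S) : dist (ψ s) (ψ s') = dist s s' :=
    (dist_eq_of_mem_support_of_GWCost_eq_zero hcost (hψ s) (hψ s')).symm
  have hψm : Measurable ψ := (Isometry.of_dist_eq hiso).continuous.measurable
  have hgraph : ∀ᵐ p ∂γ, p.2 = ψ p.1 := by
    filter_upwards [support_mem_ae] with p hp
    simpa using (dist_eq_of_mem_support_of_GWCost_eq_zero hcost hp (hψ p.1)).symm
  have hγψ : γ = σ.map fun s => (s, ψ s) := hγ.1 ▸ eq_map_graph_of_ae_eq hψm hgraph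
  have hgraphm : Measurable fun s => (s, ψ s) := measurable_id.prodMk hψm
  refine ⟨ψ, hψm, ?_, hiso, hγψ⟩
  calc σ.map ψ = (σ.map fun s => (s, ψ s)).map Prod.snd := by
        rw [map_map measurable_snd hgraphm]
        rfl
    _ = σ := by rw [← hγψ, hγ.2]
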